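/- arXiv:2501.11451 — 7 statements merged into one kernel-verified Lean document; each statement's English description precedes it below -/
import Mathlib

section
/- Let δ_x > 0, let x₀ ∈ ℝ², and let X = x₀ + [−δ_x/2, δ_x/2]² be the closed square of side length δ_x centered at x₀. For every φ ∈ [0,π) and s ∈ ℝ, set t = x₀·θ_φ − s. If it is NOT the case that φ ∈ {0, π/2} and |t| = s̄(φ), then the one-dimensional Hausdorff measure of the intersection of X with the line L_{φ,s} equals δ_x² · w^rd(φ, t); that is, the ray-driven weight function is a closed form for the intersection length of a line with a square pixel. -/
/-!
The line `L_{φ,s}` is the image of the isometric embedding `r ↦ s θ_φ + r θ_φ⊥` of `ℝ`, so the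
`1`-dimensional Hausdorff measure of `X ∩ L_{φ,s}` is the Lebesgue measure of the parameters `r`
landing in `X`. Each of the two coordinate constraints cuts out an interval of length
`δx / |sin φ|`, resp. `δx / |cos φ|` (or all of `ℝ` or nothing on the axes), and their centres are
`|t| / |sin φ cos φ|` apart. Two intervals of half-lengths `a`, `b` with centres `p`, `q` overlap in
length `max 0 (min (2a, 2b, a + b - |p - q|))`, and the three regimes of this minimum are the three
branches of `w^rd`.
-/

open MeasureTheory Real Set Filter

/-- The ray-driven weight function `w^rd(φ, t)` (for spatial resolution `δx`).
Here `κ(φ) = min{1/|cos φ|, 1/|sin φ|}` (with `1/0 = ∞`) is expressed as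
`1 / max |cos φ| |sin φ|`, which is the same real number. -/
noncomputable def rayWeight (δx φ t : ℝ) : ℝ :=
  (1 / δx) *
    (if δx / 2 * |(|Real.cos φ| - |Real.sin φ|)| ≤ |t| ∧
        |t| < δx / 2 * (|Real.cos φ| + |Real.sin φ|) then
      (δx / 2 * (|Real.cos φ| + |Real.sin φ|) - |t|) / (δx * |Real.cos φ * Real.sin φ|)
    else if |t| < δx / 2 * |(|Real.cos φ| - |Real.sin φ|)| then
      1 / max |Real.cos φ| |Real.sin φ|
    else if (φ = 0 ∨ φ = Real.pi / 2) ∧ |t| = δx / 2 * (|Real.cos φ| + |Real.sin φ|) then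
      1 / 2
    else 0)

/-- The pixel-driven weight function `w^pd(t)` (for detector resolution `δs`). -/
noncomputable def pixelWeight (δs t : ℝ) : ℝ := (1 / δs ^ 2) * max (δs - |t|) 0

theorem volume_Icc_inter_Icc (p q a b : ℝ) :
    volume (Icc (p - a) (p + a) ∩ Icc (q - b) (q + b)) =
      ENNReal.ofReal (min (min (2 * a) (2 * b)) (a + b - |p - q|)) := by
  rw [Icc_inter_Icc, Real.volume_Icc, abs_eq_max_neg]
  congr 1
  simp only [min_def, max_def]
  split_ifs <;> linarith

theorem setOf_abs_sub_mul_le_eq_Icc (a h k : ℝ) (hk : k ≠ 0) :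
    {r : ℝ | |a - r * k| ≤ h} = Icc (a / k - h / |k|) (a / k + h / |k|) := by
  ext r
  have hk' : 0 < |k| := abs_pos.mpr hk
  have : |a - r * k| = |a / k - r| * |k| := by
    rw [← abs_mul, sub_mul, div_mul_cancel₀ a hk]
  rw [mem_ofPred_eq, this, ← le_div_iff₀ hk', abs_sub_le_iff, mem_Icc]
  constructor <;> rintro ⟨h₁, h₂⟩ <;> constructor <;> linarith

theorem isometry_add_smul {E : Type*} [NormedAddCommGroup E] [NormedSpace ℝ E] (p v : E)
    (hv : ‖v‖ = 1) : Isometry fun r : ℝ => p + r • v :=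
  Isometry.of_dist_eq fun a b => by
    rw [dist_eq_norm, add_sub_add_left_eq_sub, ← sub_smul, norm_smul, hv, mul_one, Real.dist_eq,
      Real.norm_eq_abs]

theorem Isometry.hausdorffMeasure_inter_range {E : Type*} [EMetricSpace E] [MeasurableSpace E]
    [BorelSpace E] {f : ℝ → E} (hf : Isometry f) (X : Set E) :
    μH[1] (X ∩ range f) = volume (f ⁻¹' X) := by
  rw [← image_preimage_eq_inter_range, hf.hausdorffMeasure_image (Or.inl zero_le_one),
    hausdorffMeasure_real]

/-- `rayWeight` with `|cos φ|`, `|sin φ|` abstracted to `c`, `s`, and without the tie branch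
`1/2`. -/
noncomputable def chordWeight (δx c s τ : ℝ) : ℝ :=
  if δx / 2 * |c - s| ≤ |τ| ∧ |τ| < δx / 2 * (c + s) then
    (δx / 2 * (c + s) - |τ|) / (δx * (c * s))
  else if |τ| < δx / 2 * |c - s| then 1 / max c s
  else 0

theorem ofReal_min_eq_mul_chordWeight {δx c s : ℝ} (τ : ℝ) (hδx : 0 < δx) (hc : 0 < c)
    (hs : 0 < s) :
    ENNReal.ofReal (min (min (δx / s) (δx / c)) ((δx / 2 * (c + s) - |τ|) / (s * c))) =
      ENNReal.ofReal (δx * chordWeight δx c s τ) := by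
  have hsc : 0 < s * c := mul_pos hs hc
  -- the third term is below `δx / max c s` exactly when `δx / 2 * |c - s| ≤ |τ|`
  have hdiff : δx / 2 * (c - s) ≤ δx / 2 * |c - s| ∧ δx / 2 * (s - c) ≤ δx / 2 * |c - s| := by
    constructor <;> gcongr
    · exact le_abs_self _
    · exact neg_sub c s ▸ neg_le_abs _
  unfold chordWeight
  split_ifs with hmid hin
  · have hle_s : (δx / 2 * (c + s) - |τ|) / (s * c) ≤ δx / s := by
      rw [div_le_div_iff₀ hsc hs]; nlinarith
    have hle_c : (δx / 2 * (c + s) - |τ|) / (s * c) ≤ δx / c := by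
      rw [div_le_div_iff₀ hsc hc]; nlinarith
    rw [min_eq_right (le_min hle_s hle_c)]
    congr 1
    field_simp
  · have : δx * (1 / max c s) = min (δx / s) (δx / c) := by
      rcases le_total c s with h | h
      · rw [max_eq_right h, min_eq_left (div_le_div_of_nonneg_left hδx.le hc h), mul_one_div]
      · rw [max_eq_left h, min_eq_right (div_le_div_of_nonneg_left hδx.le hs h), mul_one_div]
    rw [this, min_eq_left]
    rcases le_total c s with h | h
    · rw [abs_sub_comm, abs_of_nonneg (sub_nonneg.mpr h)] at hin
      refine (min_le_left _ _).trans ?_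
      rw [div_le_div_iff₀ hs hsc]; nlinarith
    · rw [abs_of_nonneg (sub_nonneg.mpr h)] at hin
      refine (min_le_right _ _).trans ?_
      rw [div_le_div_iff₀ hc hsc]; nlinarith
  · have hout : δx / 2 * (c + s) ≤ |τ| := by
      by_contra! h
      exact hmid ⟨not_lt.mp hin, h⟩
    rw [mul_zero, ENNReal.ofReal_zero, ENNReal.ofReal_eq_zero]
    exact (min_le_right _ _).trans (div_nonpos_of_nonpos_of_nonneg (by linarith) hsc.le)

theorem chordWeight_one_zero (δx τ : ℝ) :
    chordWeight δx 1 0 τ = if |τ| < δx / 2 then 1 else 0 := by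
  simp only [chordWeight, sub_zero, add_zero, abs_one, mul_one, mul_zero, max_eq_left zero_le_one]
  split_ifs with hmid
  · linarith [hmid.1, hmid.2]
  all_goals norm_num

theorem chordWeight_comm (δx c s τ : ℝ) : chordWeight δx c s τ = chordWeight δx s c τ := by
  simp only [chordWeight, abs_sub_comm c s, add_comm c s, mul_comm c s, max_comm c s]

theorem rayWeight_eq_chordWeight {δx φ t : ℝ}
    (h : ¬((φ = 0 ∨ φ = π / 2) ∧ |t| = δx / 2 * (|cos φ| + |sin φ|))) :
    rayWeight δx φ t = 1 / δx * chordWeight δx |cos φ| |sin φ| t := by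
  rw [rayWeight, chordWeight, abs_mul, if_neg h]

theorem volume_strip_inter_strip_of_ne_zero {δx : ℝ} (a b : ℝ) {u v : ℝ} (hδx : 0 < δx)
    (hu : u ≠ 0) (hv : v ≠ 0) :
    volume ({r | |a - r * u| ≤ δx / 2} ∩ {r | |b - r * v| ≤ δx / 2}) =
      ENNReal.ofReal (δx * chordWeight δx |v| |u| (a * v - b * u)) := by
  have hu' : 0 < |u| := abs_pos.mpr hu
  have hv' : 0 < |v| := abs_pos.mpr hv
  rw [setOf_abs_sub_mul_le_eq_Icc _ _ _ hu, setOf_abs_sub_mul_le_eq_Icc _ _ _ hv,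
    volume_Icc_inter_Icc, ← ofReal_min_eq_mul_chordWeight _ hδx hv' hu']
  have hcenter : a / u - b / v = (a * v - b * u) / (u * v) := by field_simp
  rw [hcenter, abs_div, abs_mul]
  congr 3 <;> field_simp

theorem volume_strip_zero_inter_strip {δx a : ℝ} (b : ℝ) {v : ℝ} (hv : |v| = 1)
    (ha : |a| ≠ δx / 2) :
    volume ({r | |a - r * 0| ≤ δx / 2} ∩ {r | |b - r * v| ≤ δx / 2}) =
      if |a| < δx / 2 then ENNReal.ofReal δx else 0 := by
  simp only [mul_zero, sub_zero]
  split_ifs with hlt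
  · have hconst : {r : ℝ | |a| ≤ δx / 2} = univ := eq_univ_of_forall fun _ => hlt.le
    rw [hconst, univ_inter,
      setOf_abs_sub_mul_le_eq_Icc _ _ _ (abs_ne_zero.mp (hv ▸ one_ne_zero)), hv, Real.volume_Icc]
    ring_nf
  · have hconst : {r : ℝ | |a| ≤ δx / 2} = ∅ :=
      eq_empty_of_forall_notMem fun _ hle => hlt (lt_of_le_of_ne hle ha)
    rw [hconst, empty_inter, measure_empty]

theorem volume_strip_inter_strip {δx : ℝ} (a b : ℝ) {u v : ℝ} (hδx : 0 < δx)
    (huv : u ^ 2 + v ^ 2 = 1) (htie : u = 0 ∨ v = 0 → |a * v - b * u| ≠ δx / 2 * (|v| + |u|)) :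
    volume ({r | |a - r * u| ≤ δx / 2} ∩ {r | |b - r * v| ≤ δx / 2}) =
      ENNReal.ofReal (δx * chordWeight δx |v| |u| (a * v - b * u)) := by
  rcases eq_or_ne u 0 with rfl | hu
  · have hv : |v| = 1 := (abs_eq zero_le_one).mpr (by simpa using huv)
    have ha : |a| ≠ δx / 2 := by simpa [abs_mul, hv] using htie (Or.inl rfl)
    rw [volume_strip_zero_inter_strip b hv ha, hv, abs_zero, chordWeight_one_zero, mul_zero,
      sub_zero, abs_mul, hv, mul_one]
    split_ifs <;> simp
  rcases eq_or_ne v 0 with rfl | hv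
  · have hu' : |u| = 1 := (abs_eq zero_le_one).mpr (by simpa using huv)
    have hb : |b| ≠ δx / 2 := by simpa [abs_mul, hu'] using htie (Or.inr rfl)
    rw [inter_comm, volume_strip_zero_inter_strip a hu' hb, hu', abs_zero, chordWeight_comm,
      chordWeight_one_zero, mul_zero, zero_sub, abs_neg, abs_mul, hu', mul_one]
    split_ifs <;> simp
  exact volume_strip_inter_strip_of_ne_zero a b hδx hu hv

theorem eq_zero_or_eq_pi_div_two_of_mem_Ico {φ : ℝ} (hφ : φ ∈ Ico 0 π)
    (h : sin φ = 0 ∨ cos φ = 0) : φ = 0 ∨ φ = π / 2 := by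
  rcases h with h | h
  · exact Or.inl ((sin_eq_zero_iff_of_lt_of_lt (by linarith [pi_pos, hφ.1]) hφ.2).mp h)
  · exact Or.inr (injOn_cos ⟨hφ.1, hφ.2.le⟩ ⟨by positivity, by linarith [pi_pos]⟩
      (h.trans cos_pi_div_two.symm))

theorem norm_neg_sin_cos (φ : ℝ) : ‖!₂[-sin φ, cos φ]‖ = 1 := by
  simp only [EuclideanSpace.norm_eq, Fin.sum_univ_two, Matrix.cons_val_zero, Matrix.cons_val_one,
    Matrix.cons_val_fin_one, norm_eq_abs, sq_abs, neg_sq, sin_sq_add_cos_sq, sqrt_one]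

theorem setOf_line_eq_range (s φ : ℝ) :
    {y : EuclideanSpace ℝ (Fin 2) | ∃ r : ℝ, y 0 = s * cos φ - r * sin φ ∧
      y 1 = s * sin φ + r * cos φ} =
      range fun r : ℝ => !₂[s * cos φ, s * sin φ] + r • !₂[-sin φ, cos φ] := by
  have hcoord (r : ℝ) : (!₂[s * cos φ, s * sin φ] + r • !₂[-sin φ, cos φ]) 0 =
      s * cos φ - r * sin φ ∧ (!₂[s * cos φ, s * sin φ] + r • !₂[-sin φ, cos φ]) 1 =
      s * sin φ + r * cos φ := by
    simp only [PiLp.add_apply, PiLp.smul_apply, smul_eq_mul, Matrix.cons_val_zero,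
      Matrix.cons_val_one, Matrix.cons_val_fin_one, mul_neg, ← sub_eq_add_neg, and_self]
  ext y
  constructor
  · rintro ⟨r, h₀, h₁⟩
    refine ⟨r, ?_⟩
    ext i
    fin_cases i
    exacts [(hcoord r).1.trans h₀.symm, (hcoord r).2.trans h₁.symm]
  · rintro ⟨r, rfl⟩
    exact ⟨r, hcoord r⟩

theorem preimage_line_square (x₀ p v : EuclideanSpace ℝ (Fin 2)) (h : ℝ) :
    (fun r : ℝ => p + r • v) ⁻¹' {y | |y 0 - x₀ 0| ≤ h ∧ |y 1 - x₀ 1| ≤ h} =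
      {r | |(x₀ 0 - p 0) - r * v 0| ≤ h} ∩ {r | |(x₀ 1 - p 1) - r * v 1| ≤ h} := by
  ext r
  simp only [mem_preimage, mem_ofPred_eq, mem_inter_iff, PiLp.add_apply, PiLp.smul_apply,
    smul_eq_mul]
  rw [abs_sub_comm (x₀ 0 - _), abs_sub_comm (x₀ 1 - _)]
  ring_nf

/-- For `δ_x > 0`, a closed square `X` of side length `δ_x` centered at
`x₀ ∈ ℝ²`, an angle `φ ∈ [0, π)` and `s ∈ ℝ`, with `t = x₀ · θ_φ - s`: provided it is not
the case that `φ ∈ {0, π/2}` and `|t| = s̄(φ)`, the 1-dimensional Hausdorff measure of the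
intersection of `X` with the line `L_{φ,s}` equals `δ_x² · w^rd(φ, t)`. -/
theorem stmt0 (δx : ℝ) (hδx : 0 < δx) (x₀ : EuclideanSpace ℝ (Fin 2))
    (X : Set (EuclideanSpace ℝ (Fin 2)))
    (hX : X = {y | |y 0 - x₀ 0| ≤ δx / 2 ∧ |y 1 - x₀ 1| ≤ δx / 2})
    (φ s : ℝ) (hφ : φ ∈ Set.Ico 0 Real.pi)
    (t : ℝ) (ht : t = (x₀ 0 * Real.cos φ + x₀ 1 * Real.sin φ) - s)
    (hne : ¬((φ = 0 ∨ φ = Real.pi / 2) ∧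
      |t| = δx / 2 * (|Real.cos φ| + |Real.sin φ|)))
    (L : Set (EuclideanSpace ℝ (Fin 2)))
    (hL : L = {y | ∃ r : ℝ, y 0 = s * Real.cos φ - r * Real.sin φ ∧
      y 1 = s * Real.sin φ + r * Real.cos φ}) :
    μH[1] (X ∩ L) = ENNReal.ofReal (δx ^ 2 * rayWeight δx φ t) := by
  subst hX hL
  have hτ : (x₀ 0 - s * cos φ) * cos φ - (x₀ 1 - s * sin φ) * -sin φ = t := by
    rw [ht]; linear_combination (-s) * sin_sq_add_cos_sq φ
  have htie : -sin φ = 0 ∨ cos φ = 0 → |t| ≠ δx / 2 * (|cos φ| + |-sin φ|) := by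
    rw [neg_eq_zero, abs_neg]
    exact fun h habs => hne ⟨eq_zero_or_eq_pi_div_two_of_mem_Ico hφ h, habs⟩
  rw [setOf_line_eq_range,
    (isometry_add_smul _ _ (norm_neg_sin_cos φ)).hausdorffMeasure_inter_range, preimage_line_square]
  simp only [Matrix.cons_val_zero, Matrix.cons_val_one, Matrix.cons_val_fin_one]
  rw [volume_strip_inter_strip _ _ hδx (by rw [neg_sq, sin_sq_add_cos_sq]) (hτ ▸ htie), hτ,
    rayWeight_eq_chordWeight hne, abs_neg]
  congr 1
  field_simp
end

section
/- Let δ_x > 0, let x₀ ∈ ℝ², let X = x₀ + [−δ_x/2, δ_x/2]² be the closed square of side length δ_x centered at x₀, and let u = χ_X − (1/2)·χ_{∂X}, where ∂X is the topological boundary of X. Then for EVERY φ ∈ [0,π) and every s ∈ ℝ (including the degenerate cases where the line lies along an edge of X), ∫_ℝ u(s θ_φ + r θ_φ⊥) dr = δ_x² · w^rd(φ, x₀·θ_φ − s). -/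
open MeasureTheory Real Set Filter

/-!
As `X` is closed, `u = (χ_X + χ_{int X}) / 2`, so the integral of `u` along the line is the mean of
the lengths of the chords that `X` and its interior cut out of it. For the sup metric on `ℝ × ℝ`,
`X` is the closed ball of radius `δx/2` about `x₀` and its interior the open ball, so off the axes
each chord is an intersection of two intervals of the line parameter, one per coordinate, with
radii `δx/(2|sin φ|)`, `δx/(2|cos φ|)` and centres `|x₀·θ_φ - s| / |sin φ cos φ|` apart; the length
of that intersection is `δx² w^rd`. For `φ ∈ {0, π/2}` one coordinate is constant along the line:
both chords have length `δx` or vanish, except along an edge of `X`, where only the closed one has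
length `δx`, which is where the value `1/2` comes from.
-/

open Metric

lemma indicator_sub_half_indicator_frontier {α : Type*} [TopologicalSpace α] {X : Set α}
    (hX : IsClosed X) (y : α) :
    X.indicator (fun _ => (1 : ℝ)) y - 1 / 2 * (frontier X).indicator (fun _ => 1) y =
      1 / 2 * (X.indicator 1 y + (interior X).indicator 1 y) := by
  rw [hX.frontier_eq]
  by_cases hy : y ∈ interior X
  · simp [hy, interior_subset hy]; norm_num
  by_cases hy' : y ∈ X
  · simp [hy, hy']; norm_num
  · simp [hy, hy']

lemma integral_indicator_sub_half_indicator_frontier_comp {α : Type*} [TopologicalSpace α]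
    {X : Set α} (hX : IsClosed X) {p : ℝ → α} (hp : Continuous p)
    (hfin : volume (p ⁻¹' X) ≠ ⊤) :
    ∫ r, (X.indicator (fun _ => (1 : ℝ)) (p r) - 1 / 2 * (frontier X).indicator (fun _ => 1) (p r))
      = 1 / 2 * (volume.real (p ⁻¹' X) + volume.real (p ⁻¹' interior X)) := by
  have hmeas : MeasurableSet (p ⁻¹' X) := (hX.preimage hp).measurableSet
  have hmeas' : MeasurableSet (p ⁻¹' interior X) := (isOpen_interior.preimage hp).measurableSet
  have hfin' : volume (p ⁻¹' interior X) ≠ ⊤ :=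
    measure_ne_top_of_subset (preimage_mono interior_subset) hfin
  have hcomp (S : Set α) (r : ℝ) : S.indicator (1 : α → ℝ) (p r) = (p ⁻¹' S).indicator 1 r :=
    rfl
  simp_rw [indicator_sub_half_indicator_frontier hX, hcomp]
  rw [integral_const_mul, integral_add ((integrable_indicator_iff hmeas).2 (integrableOn_const hfin))
    ((integrable_indicator_iff hmeas').2 (integrableOn_const hfin')),
    integral_indicator_one hmeas, integral_indicator_one hmeas']

lemma half_volume_real_setOf_inter_add {P Q : Prop} [Decidable P] [Decidable Q] (hQP : Q → P)
    {C D : Set ℝ} {δ : ℝ} (hC : volume.real C = δ) (hD : volume.real D = δ) :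
    1 / 2 * (volume.real ({_r | P} ∩ C) + volume.real ({_r | Q} ∩ D)) =
      δ * (if Q then 1 else if P then 1 / 2 else 0) := by
  by_cases hQ : Q
  · simp [hQ, hQP hQ, hC, hD]; ring
  by_cases hP : P
  · simp [hP, hQ, hC]; ring
  · simp [hP, hQ]

lemma min_add_sub_max_sub (m₁ m₂ ρ₁ ρ₂ : ℝ) :
    min (m₁ + ρ₁) (m₂ + ρ₂) - max (m₁ - ρ₁) (m₂ - ρ₂) =
      min (ρ₁ + ρ₂ - |m₁ - m₂|) (2 * min ρ₁ ρ₂) := by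
  rcases abs_cases (m₁ - m₂) with ⟨h, _⟩ | ⟨h, _⟩ <;> rw [h] <;>
    simp only [min_def, max_def] <;> split_ifs <;> linarith

lemma volume_real_closedBall_inter_closedBall (m₁ m₂ ρ₁ ρ₂ : ℝ) :
    volume.real (closedBall m₁ ρ₁ ∩ closedBall m₂ ρ₂) =
      max (min (ρ₁ + ρ₂ - |m₁ - m₂|) (2 * min ρ₁ ρ₂)) 0 := by
  rw [Real.closedBall_eq_Icc, Real.closedBall_eq_Icc, Icc_inter_Icc, Real.volume_real_Icc,
    min_add_sub_max_sub]

lemma volume_real_ball_inter_ball (m₁ m₂ ρ₁ ρ₂ : ℝ) :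
    volume.real (ball m₁ ρ₁ ∩ ball m₂ ρ₂) =
      max (min (ρ₁ + ρ₂ - |m₁ - m₂|) (2 * min ρ₁ ρ₂)) 0 := by
  rw [Real.ball_eq_Ioo, Real.ball_eq_Ioo, Ioo_inter_Ioo, Real.volume_real_Ioo,
    min_add_sub_max_sub]

lemma preimage_add_mul_closedBall {v : ℝ} (hv : v ≠ 0) (a c h : ℝ) :
    (fun r => a + r * v) ⁻¹' closedBall c h = closedBall ((c - a) / v) (h / |v|) := by
  ext r
  have : a + r * v - c = (r - (c - a) / v) * v := by field_simp; ring
  simp only [mem_preimage, mem_closedBall, Real.dist_eq, this, abs_mul,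
    le_div_iff₀ (abs_pos.2 hv)]

lemma preimage_add_mul_ball {v : ℝ} (hv : v ≠ 0) (a c h : ℝ) :
    (fun r => a + r * v) ⁻¹' ball c h = ball ((c - a) / v) (h / |v|) := by
  ext r
  have : a + r * v - c = (r - (c - a) / v) * v := by field_simp; ring
  simp only [mem_preimage, mem_ball, Real.dist_eq, this, abs_mul, lt_div_iff₀ (abs_pos.2 hv)]

noncomputable def radonLine (φ s r : ℝ) : ℝ × ℝ := (s * cos φ - r * sin φ, s * sin φ + r * cos φ)

lemma continuous_radonLine (φ s : ℝ) : Continuous (radonLine φ s) := by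
  unfold radonLine; fun_prop

lemma antilipschitzWith_radonLine (φ s : ℝ) : AntilipschitzWith 2 (radonLine φ s) := by
  refine AntilipschitzWith.of_le_mul_dist fun r r' => ?_
  set d₁ := (radonLine φ s r).1 - (radonLine φ s r').1
  set d₂ := (radonLine φ s r).2 - (radonLine φ s r').2
  have hr : r - r' = d₂ * cos φ - d₁ * sin φ := by
    simp only [d₁, d₂, radonLine]; linear_combination (r' - r) * sin_sq_add_cos_sq φ
  have hd : dist (radonLine φ s r) (radonLine φ s r') = max |d₁| |d₂| := by
    rw [Prod.dist_eq, Real.dist_eq, Real.dist_eq]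
  rw [Real.dist_eq, hr, hd, NNReal.coe_ofNat]
  calc |d₂ * cos φ - d₁ * sin φ| ≤ |d₂| * |cos φ| + |d₁| * |sin φ| := by
        rw [← abs_mul, ← abs_mul]; exact abs_sub _ _
    _ ≤ |d₂| * 1 + |d₁| * 1 := by gcongr <;> first | exact abs_cos_le_one φ | exact abs_sin_le_one φ
    _ ≤ 2 * max |d₁| |d₂| := by linarith [le_max_left |d₁| |d₂|, le_max_right |d₁| |d₂|]

lemma volume_preimage_radonLine_closedBall_ne_top (φ s : ℝ) (x : ℝ × ℝ) (h : ℝ) :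
    volume (radonLine φ s ⁻¹' closedBall x h) ≠ ⊤ :=
  ((antilipschitzWith_radonLine φ s).isBounded_preimage isBounded_closedBall).measure_lt_top.ne

lemma radonLine_zero (s : ℝ) : radonLine 0 s = Prod.mk s := by
  funext r; simp [radonLine]

lemma radonLine_pi_div_two (s : ℝ) : radonLine (π / 2) s = fun r => (-r, s) := by
  funext r; simp [radonLine]

lemma radonLine_eq_add_mul (φ s : ℝ) :
    radonLine φ s = fun r => (s * cos φ + r * -sin φ, s * sin φ + r * cos φ) := by
  funext r; simp [radonLine, sub_eq_add_neg]

lemma preimage_radonLine_closedBall {φ : ℝ} (hs : sin φ ≠ 0) (hc : cos φ ≠ 0) (s x₁ x₂ h : ℝ) :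
    radonLine φ s ⁻¹' closedBall (x₁, x₂) h =
      closedBall ((x₁ - s * cos φ) / -sin φ) (h / |sin φ|) ∩
        closedBall ((x₂ - s * sin φ) / cos φ) (h / |cos φ|) := by
  rw [← closedBall_prod_same, radonLine_eq_add_mul, mk_preimage_prod,
    preimage_add_mul_closedBall (neg_ne_zero.2 hs), preimage_add_mul_closedBall hc, abs_neg]

lemma preimage_radonLine_ball {φ : ℝ} (hs : sin φ ≠ 0) (hc : cos φ ≠ 0) (s x₁ x₂ h : ℝ) :
    radonLine φ s ⁻¹' ball (x₁, x₂) h =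
      ball ((x₁ - s * cos φ) / -sin φ) (h / |sin φ|) ∩
        ball ((x₂ - s * sin φ) / cos φ) (h / |cos φ|) := by
  rw [← ball_prod_same, radonLine_eq_add_mul, mk_preimage_prod,
    preimage_add_mul_ball (neg_ne_zero.2 hs), preimage_add_mul_ball hc, abs_neg]

lemma abs_div_neg_sin_sub_div_cos {φ : ℝ} (hs : sin φ ≠ 0) (hc : cos φ ≠ 0) (s x₁ x₂ : ℝ) :
    |(x₁ - s * cos φ) / -sin φ - (x₂ - s * sin φ) / cos φ| =
      |x₁ * cos φ + x₂ * sin φ - s| / (|sin φ| * |cos φ|) := by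
  rw [div_sub_div _ _ (neg_ne_zero.2 hs) hc, abs_div, abs_mul, abs_neg]
  congr 2
  linear_combination (-s) * sin_sq_add_cos_sq φ

lemma half_volume_real_preimage_radonLine_zero {δ : ℝ} (hδ : 0 < δ) (s x₁ x₂ : ℝ) :
    1 / 2 * (volume.real (radonLine 0 s ⁻¹' closedBall (x₁, x₂) (δ / 2)) +
      volume.real (radonLine 0 s ⁻¹' ball (x₁, x₂) (δ / 2))) =
      δ * (if |x₁ - s| < δ / 2 then 1 else if |x₁ - s| ≤ δ / 2 then 1 / 2 else 0) := by
  rw [radonLine_zero, ← closedBall_prod_same, ← ball_prod_same]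
  show 1 / 2 * (volume.real ({_r | |s - x₁| ≤ δ / 2} ∩ closedBall x₂ (δ / 2)) +
    volume.real ({_r | |s - x₁| < δ / 2} ∩ ball x₂ (δ / 2))) = _
  rw [half_volume_real_setOf_inter_add (δ := δ) le_of_lt
    (by rw [Real.volume_real_closedBall (by positivity)]; ring)
    (by rw [Real.volume_real_ball (by positivity)]; ring), abs_sub_comm]

lemma half_volume_real_preimage_radonLine_pi_div_two {δ : ℝ} (hδ : 0 < δ) (s x₁ x₂ : ℝ) :
    1 / 2 * (volume.real (radonLine (π / 2) s ⁻¹' closedBall (x₁, x₂) (δ / 2)) +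
      volume.real (radonLine (π / 2) s ⁻¹' ball (x₁, x₂) (δ / 2))) =
      δ * (if |x₂ - s| < δ / 2 then 1 else if |x₂ - s| ≤ δ / 2 then 1 / 2 else 0) := by
  rw [radonLine_pi_div_two, ← closedBall_prod_same, ← ball_prod_same]
  show 1 / 2 * (volume.real (-closedBall x₁ (δ / 2) ∩ {_r | |s - x₂| ≤ δ / 2}) +
    volume.real (-ball x₁ (δ / 2) ∩ {_r | |s - x₂| < δ / 2})) = _
  rw [inter_comm, inter_comm (-ball _ _), neg_closedBall, neg_ball,
    half_volume_real_setOf_inter_add (δ := δ) le_of_lt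
      (by rw [Real.volume_real_closedBall (by positivity)]; ring)
      (by rw [Real.volume_real_ball (by positivity)]; ring), abs_sub_comm]

lemma sq_mul_rayWeight_of_axis {δ φ : ℝ} (hδ : δ ≠ 0) (hφ : φ = 0 ∨ φ = π / 2) (t : ℝ) :
    δ ^ 2 * rayWeight δ φ t =
      δ * (if |t| < δ / 2 then 1 else if |t| ≤ δ / 2 then 1 / 2 else 0) := by
  have habs : |cos φ| + |sin φ| = 1 ∧ |(|cos φ| - |sin φ|)| = 1 ∧ max |cos φ| |sin φ| = 1 := by
    rcases hφ with rfl | rfl <;> norm_num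
  simp only [rayWeight, habs, hφ, true_and, mul_one]
  rcases lt_trichotomy |t| (δ / 2) with h | h | h
  · simp [h, h.not_ge]; field_simp
  · simp [h]; field_simp
  · simp [h.not_gt, h.ne', h.not_ge]

lemma sq_mul_rayWeight_eq_div {δ φ : ℝ} (hδ : 0 < δ) (hs : sin φ ≠ 0) (hc : cos φ ≠ 0) (t : ℝ) :
    δ ^ 2 * rayWeight δ φ t =
      max (min (δ / 2 * (|cos φ| + |sin φ|) - |t|) (δ * min |cos φ| |sin φ|)) 0 /
        (|cos φ| * |sin φ|) := by
  have ha : 0 < |cos φ| := abs_pos.2 hc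
  have hb : 0 < |sin φ| := abs_pos.2 hs
  have hφ : ¬(φ = 0 ∨ φ = π / 2) := by rintro (rfl | rfl) <;> simp_all
  have hgap : δ / 2 * (|cos φ| + |sin φ|) - δ * min |cos φ| |sin φ| =
      δ / 2 * |(|cos φ| - |sin φ|)| := by
    rw [← max_sub_min_eq_abs', ← min_add_max |cos φ|]; ring
  unfold rayWeight
  rw [abs_mul]
  split_ifs with h₁ h₂ h₃
  · rw [min_eq_left (by linarith [h₁.1]), max_eq_left (by linarith [h₁.2])]; field_simp
  · have hpos : 0 ≤ δ * min |cos φ| |sin φ| := by positivity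
    rw [min_eq_right (by linarith), max_eq_left hpos, ← min_mul_max |cos φ| |sin φ|]
    field_simp
  · exact absurd h₃.1 hφ
  · push Not at h₁ h₂
    rw [max_eq_right ((min_le_left _ _).trans (by linarith [h₁ h₂]))]; simp

lemma chord_length_eq_div {a b δ T : ℝ} (ha : 0 < a) (hb : 0 < b) (hδ : 0 ≤ δ) :
    max (min (δ / 2 / b + δ / 2 / a - T / (b * a)) (2 * min (δ / 2 / b) (δ / 2 / a))) 0 =
      max (min (δ / 2 * (a + b) - T) (δ * min a b)) 0 / (a * b) := by
  have hab : 0 < a * b := mul_pos ha hb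
  have hlen : δ / 2 / b + δ / 2 / a - T / (b * a) = (δ / 2 * (a + b) - T) / (a * b) := by
    field_simp
  have hmin : 2 * min (δ / 2 / b) (δ / 2 / a) = δ * min a b / (a * b) := by
    rcases le_total a b with hle | hle
    · rw [min_eq_left (div_le_div_of_nonneg_left (by positivity) ha hle), min_eq_left hle]
      field_simp
    · rw [min_eq_right (div_le_div_of_nonneg_left (by positivity) hb hle), min_eq_right hle]
      field_simp
  simp only [hlen, hmin, min_div_div_right hab.le, ← max_div_div_right hab.le, zero_div]

lemma volume_real_preimage_radonLine_closedBall {δ φ : ℝ} (hδ : 0 < δ) (hs : sin φ ≠ 0)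
    (hc : cos φ ≠ 0) (s x₁ x₂ : ℝ) :
    volume.real (radonLine φ s ⁻¹' closedBall (x₁, x₂) (δ / 2)) =
      δ ^ 2 * rayWeight δ φ (x₁ * cos φ + x₂ * sin φ - s) := by
  rw [preimage_radonLine_closedBall hs hc, volume_real_closedBall_inter_closedBall,
    abs_div_neg_sin_sub_div_cos hs hc, chord_length_eq_div (abs_pos.2 hc) (abs_pos.2 hs) hδ.le,
    sq_mul_rayWeight_eq_div hδ hs hc]

lemma volume_real_preimage_radonLine_ball {δ φ : ℝ} (hδ : 0 < δ) (hs : sin φ ≠ 0)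
    (hc : cos φ ≠ 0) (s x₁ x₂ : ℝ) :
    volume.real (radonLine φ s ⁻¹' ball (x₁, x₂) (δ / 2)) =
      δ ^ 2 * rayWeight δ φ (x₁ * cos φ + x₂ * sin φ - s) := by
  rw [preimage_radonLine_ball hs hc, volume_real_ball_inter_ball,
    abs_div_neg_sin_sub_div_cos hs hc, chord_length_eq_div (abs_pos.2 hc) (abs_pos.2 hs) hδ.le,
    sq_mul_rayWeight_eq_div hδ hs hc]

/-- For `δ_x > 0`, the closed square `X` of side length `δ_x` centered at
`x₀ ∈ ℝ²`, and `u = χ_X - (1/2)·χ_{∂X}`: for every `φ ∈ [0, π)` and every `s ∈ ℝ`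
(including the degenerate cases where the line lies along an edge of `X`),
`∫_ℝ u(s θ_φ + r θ_φ^⊥) dr = δ_x² · w^rd(φ, x₀ · θ_φ - s)`. -/
theorem stmt1 (δx : ℝ) (hδx : 0 < δx) (x₀ : ℝ × ℝ)
    (X : Set (ℝ × ℝ))
    (hX : X = {y | |y.1 - x₀.1| ≤ δx / 2 ∧ |y.2 - x₀.2| ≤ δx / 2})
    (u : ℝ × ℝ → ℝ)
    (hu : u = fun y => Set.indicator X (fun _ => (1 : ℝ)) y -
      1 / 2 * Set.indicator (frontier X) (fun _ => (1 : ℝ)) y)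
    (φ : ℝ) (hφ : φ ∈ Set.Ico 0 Real.pi) (s : ℝ) :
    (∫ r : ℝ, u (s * Real.cos φ - r * Real.sin φ, s * Real.sin φ + r * Real.cos φ))
      = δx ^ 2 * rayWeight δx φ (x₀.1 * Real.cos φ + x₀.2 * Real.sin φ - s) := by
  obtain ⟨x₁, x₂⟩ := x₀
  have hXball : X = closedBall (x₁, x₂) (δx / 2) := by
    rw [hX, ← closedBall_prod_same]; rfl
  subst hu hXball
  refine (integral_indicator_sub_half_indicator_frontier_comp isClosed_closedBall
    (continuous_radonLine φ s) (volume_preimage_radonLine_closedBall_ne_top φ s _ _)).trans ?_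
  rw [interior_closedBall _ (by positivity)]
  dsimp only
  rcases eq_or_ne (sin φ) 0 with hs | hs
  · obtain rfl : φ = 0 := (sin_eq_zero_iff_of_lt_of_lt (by linarith [pi_pos, hφ.1]) hφ.2).1 hs
    rw [half_volume_real_preimage_radonLine_zero hδx, sq_mul_rayWeight_of_axis hδx.ne' (.inl rfl)]
    simp
  rcases eq_or_ne (cos φ) 0 with hc | hc
  · obtain rfl : φ = π / 2 := injOn_cos ⟨hφ.1, hφ.2.le⟩ ⟨by positivity, by linarith [pi_pos]⟩
      (hc.trans cos_pi_div_two.symm)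
    rw [half_volume_real_preimage_radonLine_pi_div_two hδx,
      sq_mul_rayWeight_of_axis hδx.ne' (.inr rfl)]
    simp
  rw [volume_real_preimage_radonLine_closedBall hδx hs hc,
    volume_real_preimage_radonLine_ball hδx hs hc]
  ring
end

section
/- Fix N_s ∈ ℕ with N_s ≥ 1 and δ_s = 2/N_s, and let s_p = (p+1/2)δ_s − 1 for p ∈ {0,…,N_s−1}. Then for every t ∈ [s_0, s_{N_s−1}], Σ_{p=0}^{N_s−1} δ_s · w^pd(t − s_p) · s_p = t; that is, the pixel-driven weights reproduce linear functions exactly on the interval between the first and last detector pixel centers. -/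
open MeasureTheory Real Set Filter

/-- Detector pixel center `s_p = (p + 1/2) δ_s - 1` with `δ_s = 2/Ns`. -/
noncomputable def sc (Ns p : ℕ) : ℝ := ((p : ℝ) + 1 / 2) * (2 / (Ns : ℝ)) - 1


/-! Rescaled to unit spacing, `x ↦ δ · w^pd(δ x)` is the tent function `max (1 - |x|) 0`, and
tent functions centred at the integers form the piecewise linear interpolation basis: at a
point `u` with `k ≤ u ≤ k + 1` only the tents at `k` and `k + 1` are nonzero, with weights
`1 - (u - k)` and `u - k`, so they reproduce every affine function of the node exactly. -/

noncomputable def tent (x : ℝ) : ℝ := max (1 - |x|) 0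

lemma tent_sub_natCast {u : ℝ} {k : ℕ} (hku : (k : ℝ) ≤ u) (huk : u ≤ k + 1) (p : ℕ) :
    tent (u - p) = (if p = k then 1 - (u - k) else 0) + (if p = k + 1 then u - k else 0) := by
  unfold tent
  split_ifs with hpk hpk1 hpk1
  · omega
  · subst hpk
    rw [abs_of_nonneg (by linarith), max_eq_left (by linarith), add_zero]
  · subst hpk1
    push_cast
    rw [abs_of_nonpos (by linarith), max_eq_left (by linarith)]
    ring
  · rw [add_zero]
    have hfar : 1 ≤ |u - p| := by
      rcases Nat.lt_or_gt_of_ne hpk with hlt | hgt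
      · have : (p : ℝ) + 1 ≤ k := by exact_mod_cast hlt
        rw [abs_of_nonneg (by linarith)]
        linarith
      · have : (k : ℝ) + 2 ≤ p := by exact_mod_cast (by omega : k + 2 ≤ p)
        rw [abs_of_nonpos (by linarith)]
        linarith
    exact max_eq_right (by linarith)

lemma sum_tent_mul_affine {n : ℕ} {u : ℝ} (hu₀ : 0 ≤ u) (hun : u ≤ n - 1) (c d : ℝ) :
    ∑ p ∈ Finset.range n, tent (u - p) * (c + d * p) = c + d * u := by
  set k := ⌊u⌋₊
  have hku : (k : ℝ) ≤ u := Nat.floor_le hu₀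
  have huk : u < k + 1 := Nat.lt_floor_add_one u
  have hkn : k < n := by
    have : (k : ℝ) < n := by linarith
    exact_mod_cast this
  simp only [tent_sub_natCast hku huk.le, add_mul, ite_mul, zero_mul, Finset.sum_add_distrib,
    Finset.sum_ite_eq', Finset.mem_range, if_pos hkn]
  split_ifs with hk1n
  · push_cast
    ring
  · have hu : u = k := by
      have : (n : ℝ) ≤ k + 1 := by exact_mod_cast not_lt.mp hk1n
      linarith
    rw [hu]
    ring

lemma mul_pixelWeight_eq_tent {δ : ℝ} (hδ : 0 < δ) (x : ℝ) :
    δ * pixelWeight δ x = tent (x / δ) := by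
  have hδ_mul : δ * (1 / δ ^ 2) = 1 / δ := by field_simp
  rw [pixelWeight, tent, abs_div, abs_of_pos hδ, ← mul_assoc, hδ_mul,
    mul_max_of_nonneg _ _ (by positivity), mul_zero]
  congr 1
  field_simp

theorem sum_mul_pixelWeight_mul_node {δ a t : ℝ} (hδ : 0 < δ) {n : ℕ}
    (ht : t ∈ Set.Icc a (a + (n - 1) * δ)) :
    ∑ p ∈ Finset.range n, δ * pixelWeight δ (t - (a + p * δ)) * (a + p * δ) = t := by
  have key := sum_tent_mul_affine (n := n) (u := (t - a) / δ)
    (div_nonneg (by linarith [ht.1]) hδ.le)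
    ((div_le_iff₀ hδ).mpr (by linarith [ht.2])) a δ
  rw [mul_div_cancel₀ _ hδ.ne', add_sub_cancel] at key
  refine (Finset.sum_congr rfl fun p _ => ?_).trans key
  rw [mul_pixelWeight_eq_tent hδ]
  congr 2
  · field_simp
    ring
  · ring

lemma sc_eq_add (Ns p : ℕ) : sc Ns p = sc Ns 0 + p * (2 / Ns) := by
  simp only [sc]
  push_cast
  ring

/-- For `Ns ≥ 1` detector pixels with `δ_s = 2/Ns` and centers
`s_p = (p+1/2)δ_s - 1`: for every `t ∈ [s_0, s_{Ns-1}]`,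
`Σ_{p=0}^{Ns-1} δ_s · w^pd(t - s_p) · s_p = t`, i.e. the pixel-driven weights reproduce
linear functions exactly on the interval between the first and last detector centers. -/
theorem stmt5 (Ns : ℕ) (hNs : 1 ≤ Ns) (t : ℝ)
    (ht : t ∈ Set.Icc (sc Ns 0) (sc Ns (Ns - 1))) :
    ∑ p ∈ Finset.range Ns, (2 / (Ns : ℝ)) * pixelWeight (2 / (Ns : ℝ)) (t - sc Ns p) * sc Ns p
      = t := by
  have hδ : (0 : ℝ) < 2 / Ns := by positivity
  rw [sc_eq_add Ns (Ns - 1), Nat.cast_sub hNs, Nat.cast_one] at ht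
  refine (Finset.sum_congr rfl fun p _ => ?_).trans (sum_mul_pixelWeight_mul_node hδ ht)
  rw [sc_eq_add Ns p]
end

section
/- Fix N_s ∈ ℕ with N_s ≥ 2 and δ_s = 2/N_s, and let s_p = (p+1/2)δ_s − 1 for p ∈ {0,…,N_s−1}. For every p̂ ∈ {0,…,N_s−2}, every t ∈ [s_{p̂}, s_{p̂+1}], and every family of reals (a_p)_{p=0}^{N_s−1}, one has Σ_{p=0}^{N_s−1} w^pd(t − s_p) · a_p = ((s_{p̂+1} − t)·a_{p̂} + (t − s_{p̂})·a_{p̂+1}) / δ_s²; that is, summation against the pixel-driven weights implements linear interpolation between neighboring detector pixel centers. -/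
open MeasureTheory Real Set Filter

/-- For `Ns ≥ 2` detector pixels with `δ_s = 2/Ns` and centers
`s_p = (p+1/2)δ_s - 1`: for every `ph ∈ {0,…,Ns-2}`, every `t ∈ [s_ph, s_{ph+1}]` and every
family of reals `(a_p)`, `Σ_{p=0}^{Ns-1} w^pd(t - s_p) · a_p
= ((s_{ph+1} - t)·a_ph + (t - s_ph)·a_{ph+1}) / δ_s²`, i.e. summation against the
pixel-driven weights implements linear interpolation between neighboring centers. -/
theorem stmt6 (Ns : ℕ) (hNs : 2 ≤ Ns) (ph : ℕ) (hph : ph ≤ Ns - 2)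
    (t : ℝ) (ht : t ∈ Set.Icc (sc Ns ph) (sc Ns (ph + 1))) (a : ℕ → ℝ) :
    ∑ p ∈ Finset.range Ns, pixelWeight (2 / (Ns : ℝ)) (t - sc Ns p) * a p
      = ((sc Ns (ph + 1) - t) * a ph + (t - sc Ns ph) * a (ph + 1)) / (2 / (Ns : ℝ)) ^ 2 := by
  obtain ⟨ht1, ht2⟩ := ht
  have hNpos : (0 : ℝ) < (Ns : ℝ) := by
    exact_mod_cast lt_of_lt_of_le (by norm_num) hNs
  set δ : ℝ := 2 / (Ns : ℝ) with hδdef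
  have hδ : 0 < δ := by positivity
  have hsc : ∀ p q : ℕ, sc Ns p - sc Ns q = ((p : ℝ) - (q : ℝ)) * δ := by
    intro p q; simp only [sc, hδdef]; ring
  have hstep : sc Ns (ph + 1) = sc Ns ph + δ := by
    have := hsc (ph + 1) ph
    push_cast at this
    linarith
  have hph1 : ph + 1 < Ns := by omega
  have hsub : ({ph, ph + 1} : Finset ℕ) ⊆ Finset.range Ns := by
    intro x hx
    simp only [Finset.mem_insert, Finset.mem_singleton] at hx
    rcases hx with rfl | rfl <;> simp [Finset.mem_range] <;> omega
  rw [← Finset.sum_subset hsub]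
  · rw [Finset.sum_insert (by simp), Finset.sum_singleton]
    have h1 : pixelWeight δ (t - sc Ns ph) = (sc Ns (ph + 1) - t) / δ ^ 2 := by
      have habs : |t - sc Ns ph| = t - sc Ns ph := abs_of_nonneg (by linarith)
      have hmax : max (δ - |t - sc Ns ph|) 0 = δ - (t - sc Ns ph) := by
        rw [habs, max_eq_left]; linarith [hstep]
      rw [pixelWeight, hmax]
      rw [hstep]; ring
    have h2 : pixelWeight δ (t - sc Ns (ph + 1)) = (t - sc Ns ph) / δ ^ 2 := by
      have habs : |t - sc Ns (ph + 1)| = sc Ns (ph + 1) - t := by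
        rw [abs_of_nonpos (by linarith)]; ring
      have hmax : max (δ - |t - sc Ns (ph + 1)|) 0 = t - sc Ns ph := by
        rw [habs, hstep, max_eq_left] <;> [ring; linarith]
      rw [pixelWeight, hmax]; ring
    rw [h1, h2]; ring
  · intro p hp hpn
    simp only [Finset.mem_insert, Finset.mem_singleton, not_or] at hpn
    obtain ⟨hp1, hp2⟩ := hpn
    have hzero : max (δ - |t - sc Ns p|) 0 = 0 := by
      rw [max_eq_right]
      rcases lt_or_gt_of_ne hp1 with h | h
      · -- p < ph : t - sc p ≥ δ
        have hd : sc Ns ph - sc Ns p = ((ph : ℝ) - (p : ℝ)) * δ := hsc ph p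
        have hc : (1 : ℝ) ≤ (ph : ℝ) - (p : ℝ) := by
          have : p + 1 ≤ ph := h
          have := (Nat.cast_le (α := ℝ)).mpr this
          push_cast at this; linarith
        have : δ ≤ t - sc Ns p := by nlinarith
        have habs : |t - sc Ns p| = t - sc Ns p := abs_of_nonneg (by linarith)
        rw [habs]; linarith
      · -- p > ph + 1 : sc p - t ≥ δ
        have hd : sc Ns p - sc Ns (ph + 1) = ((p : ℝ) - ((ph : ℝ) + 1)) * δ := by
          have := hsc p (ph + 1); push_cast at this; linarith
        have hc : (1 : ℝ) ≤ (p : ℝ) - ((ph : ℝ) + 1) := by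
          have h' : ph + 1 + 1 ≤ p := by omega
          have := (Nat.cast_le (α := ℝ)).mpr h'
          push_cast at this; linarith
        have : δ ≤ sc Ns p - t := by nlinarith
        have habs : |t - sc Ns p| = sc Ns p - t := by
          rw [abs_of_nonpos (by linarith)]; ring
        rw [habs]; linarith
    rw [pixelWeight, hzero]; ring
end

section
/- Fix a discretization as in the context and let ω : [0,π) × ℝ → ℝ be any function (a weight function). Then for every f ∈ L²(Ω) and every g ∈ L²(S), the convolutional Radon transform R_ω and the convolutional backprojection R_ω* satisfy the adjoint identity ∫_S (R_ω f)(φ,s) · g(φ,s) d(φ,s) = ∫_Ω f(x) · (R_ω* g)(x) dx. -/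
open MeasureTheory Real Set Filter

/-- Spatial pixel center `x_ij` for an `Nx × Nx` grid on `[-1,1]²` (so `δ_x = 2/Nx`). -/
noncomputable def xc (Nx : ℕ) (i j : Fin Nx) : ℝ × ℝ :=
  (((i : ℝ) + 1 / 2) * (2 / (Nx : ℝ)) - 1, ((j : ℝ) + 1 / 2) * (2 / (Nx : ℝ)) - 1)

/-- Spatial pixel `X_ij = x_ij + [-δ_x/2, δ_x/2]²`. -/
noncomputable def Xpix (Nx : ℕ) (i j : Fin Nx) : Set (ℝ × ℝ) :=
  {y | |y.1 - (xc Nx i j).1| ≤ (2 / (Nx : ℝ)) / 2 ∧ |y.2 - (xc Nx i j).2| ≤ (2 / (Nx : ℝ)) / 2}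

/-- Detector pixel `S_p = [s_p - δ_s/2, s_p + δ_s/2)`. -/
noncomputable def Spix (Ns : ℕ) (p : Fin Ns) : Set ℝ :=
  Set.Ico (sc Ns p - (2 / (Ns : ℝ)) / 2) (sc Ns p + (2 / (Ns : ℝ)) / 2)

/-- The successor angle `φ_{q+1}`, with the convention `φ_{N_φ} = φ_0 + π`. -/
noncomputable def angNext {Nφ : ℕ} (ang : Fin Nφ → ℝ) (q : Fin Nφ) : ℝ :=
  if h : (q : ℕ) + 1 < Nφ then ang ⟨(q : ℕ) + 1, h⟩ else ang ⟨0, q.pos⟩ + Real.pi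

/-- The predecessor angle `φ_{q-1}`, with the convention `φ_{-1} = φ_{N_φ-1} - π`. -/
noncomputable def angPrev {Nφ : ℕ} (ang : Fin Nφ → ℝ) (q : Fin Nφ) : ℝ :=
  if (q : ℕ) = 0 then ang ⟨Nφ - 1, Nat.sub_lt q.pos Nat.one_pos⟩ - Real.pi
  else ang ⟨(q : ℕ) - 1, lt_of_le_of_lt (Nat.sub_le _ _) q.isLt⟩

/-- Left endpoint `(φ_{q-1} + φ_q)/2` of the angular pixel `Φ_q`. -/
noncomputable def phiLo {Nφ : ℕ} (ang : Fin Nφ → ℝ) (q : Fin Nφ) : ℝ :=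
  (angPrev ang q + ang q) / 2

/-- Right endpoint `(φ_q + φ_{q+1})/2` of the angular pixel `Φ_q`. -/
noncomputable def phiHi {Nφ : ℕ} (ang : Fin Nφ → ℝ) (q : Fin Nφ) : ℝ :=
  (ang q + angNext ang q) / 2

/-- The length `|Φ_q|` of the angular pixel `Φ_q`. -/
noncomputable def phiLen {Nφ : ℕ} (ang : Fin Nφ → ℝ) (q : Fin Nφ) : ℝ :=
  phiHi ang q - phiLo ang q

/-- The angular pixel `Φ_q = [(φ_{q-1}+φ_q)/2, (φ_q+φ_{q+1})/2)`, π-periodically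
projected into `[0, π)`. -/
noncomputable def PhiSet {Nφ : ℕ} (ang : Fin Nφ → ℝ) (q : Fin Nφ) : Set ℝ :=
  {φ | φ ∈ Set.Ico 0 Real.pi ∧
    ∃ k : ℤ, φ + (k : ℝ) * Real.pi ∈ Set.Ico (phiLo ang q) (phiHi ang q)}

/-- `x · θ_φ`, the projection of the point `x` onto the detector direction `θ_φ`. -/
noncomputable def proj (x : ℝ × ℝ) (φ : ℝ) : ℝ := x.1 * Real.cos φ + x.2 * Real.sin φ

/-- The spatial domain `Ω = B(0,1) ⊂ ℝ²`. -/
noncomputable def Omg : Set (ℝ × ℝ) := {x | x.1 ^ 2 + x.2 ^ 2 < 1}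

/-- The sinogram domain `S = [0, π) × (-1, 1)`, with coordinates `(φ, s)`. -/
noncomputable def Sdom : Set (ℝ × ℝ) := Set.Ico 0 Real.pi ×ˢ Set.Ioo (-1 : ℝ) 1

/-- The convolutional Radon transform `R_ω` with weight function `ω`. -/
noncomputable def convRadon (Nx Ns : ℕ) {Nφ : ℕ} (ang : Fin Nφ → ℝ)
    (ω : ℝ → ℝ → ℝ) (f : ℝ × ℝ → ℝ) (y : ℝ × ℝ) : ℝ :=
  ∑ q : Fin Nφ, ∑ p : Fin Ns,
    Set.indicator (PhiSet ang q ×ˢ Spix Ns p) (fun _ => (1 : ℝ)) y *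
      ∑ i : Fin Nx, ∑ j : Fin Nx,
        ω (ang q) (proj (xc Nx i j) (ang q) - sc Ns (p : ℕ)) * ∫ x in Xpix Nx i j, f x

/-- The convolutional backprojection `R_ω^*` with weight function `ω`. -/
noncomputable def convBack (Nx Ns : ℕ) {Nφ : ℕ} (ang : Fin Nφ → ℝ)
    (ω : ℝ → ℝ → ℝ) (g : ℝ × ℝ → ℝ) (x : ℝ × ℝ) : ℝ :=
  ∑ i : Fin Nx, ∑ j : Fin Nx,
    Set.indicator (Xpix Nx i j) (fun _ => (1 : ℝ)) x *
      ∑ q : Fin Nφ, ∑ p : Fin Ns,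
        ω (ang q) (proj (xc Nx i j) (ang q) - sc Ns (p : ℕ)) *
          ∫ z in PhiSet ang q ×ˢ Spix Ns p, g z

/-- The Radon transform `(Rf)(φ,s) = ∫ f(s θ_φ + t θ_φ^⊥) dt`, as a function of
`y = (φ, s)`. -/
noncomputable def radonT (f : ℝ × ℝ → ℝ) (y : ℝ × ℝ) : ℝ :=
  ∫ t : ℝ, f (y.2 * Real.cos y.1 - t * Real.sin y.1, y.2 * Real.sin y.1 + t * Real.cos y.1)

/-- The backprojection `(R^* g)(x) = ∫₀^π g(φ, x · θ_φ) dφ`. -/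
noncomputable def radonAdj (g : ℝ × ℝ → ℝ) (x : ℝ × ℝ) : ℝ :=
  ∫ φ in (0 : ℝ)..Real.pi, g (φ, proj x φ)

/-!
Both transforms are finite combinations of pixel indicators with constant coefficients, so
integrating against `g` (resp. `f`) turns each indicator into an integral over its pixel and
both pairings become the same finite sum
`∑ q p i j, ω(φ_q, x_ij·θ_{φ_q} - s_p) (∫_{X_ij} f) (∫_{Φ_q×S_p} g)`.
This only needs `f` and `g` integrable, which holds since they are `L²` with bounded support.
-/

section

variable {α : Type*} [MeasurableSpace α] {μ : Measure α}

theorem MeasureTheory.MemLp.integrable_of_forall_compl_eq_zero {E : Type*}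
    [NormedAddCommGroup E] {p : ENNReal} (hp : 1 ≤ p) {s : Set α} (hs : μ s < ⊤) {f : α → E}
    (hf : MemLp f p μ) (h0 : ∀ x ∉ s, f x = 0) : Integrable f μ := by
  have : Fact (μ s < ⊤) := ⟨hs⟩
  refine (integrableOn_iff_integrable_of_support_subset fun x hx => ?_).1
    ((hf.restrict s).integrable hp)
  by_contra hxs
  exact hx (h0 x hxs)

theorem integral_sum_sum_indicator_mul {ι κ : Type*} [Fintype ι] [Fintype κ]
    {A : ι → κ → Set α} (hA : ∀ i k, MeasurableSet (A i k)) (c : ι → κ → ℝ)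
    {h : α → ℝ} (hh : Integrable h μ) :
    ∫ x, (∑ i, ∑ k, (A i k).indicator (fun _ => (1 : ℝ)) x * c i k) * h x ∂μ
      = ∑ i, ∑ k, c i k * ∫ x in A i k, h x ∂μ := by
  have hterm : ∀ i k x, (A i k).indicator (fun _ => (1 : ℝ)) x * c i k * h x
      = c i k * (A i k).indicator h x := by
    intro i k x
    by_cases hx : x ∈ A i k <;> simp [hx]
  simp_rw [Finset.sum_mul, hterm]
  have hint : ∀ i k, Integrable (fun x => c i k * (A i k).indicator h x) μ :=
    fun i k => (hh.indicator (hA i k)).const_mul (c i k)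
  rw [integral_finsetSum _ fun i _ => integrable_finsetSum _ fun k _ => hint i k]
  refine Finset.sum_congr rfl fun i _ => ?_
  rw [integral_finsetSum _ fun k _ => hint i k]
  refine Finset.sum_congr rfl fun k _ => ?_
  rw [integral_const_mul, integral_indicator (hA i k)]

end

theorem sum_sum_mul_sum_sum_comm {R ι κ ι' κ' : Type*} [CommSemiring R] [Fintype ι]
    [Fintype κ] [Fintype ι'] [Fintype κ'] (w : ι → κ → ι' → κ' → R) (F : ι' → κ' → R)
    (G : ι → κ → R) :
    ∑ q, ∑ p, (∑ i, ∑ j, w q p i j * F i j) * G q p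
      = ∑ i, ∑ j, (∑ q, ∑ p, w q p i j * G q p) * F i j := by
  simp only [Finset.sum_mul, ← Fintype.sum_prod_type']
  exact Fintype.sum_equiv ((Equiv.prodAssoc _ _ _).symm.trans
    ((Equiv.prodComm _ _).trans (Equiv.prodAssoc _ _ _))) _ _ fun _ => by
      simp only [Equiv.trans_apply, Equiv.prodAssoc_symm_apply, Equiv.prodComm_apply,
        Prod.swap_prod_mk, Equiv.prodAssoc_apply]
      ring

theorem measurableSet_Xpix (Nx : ℕ) (i j : Fin Nx) : MeasurableSet (Xpix Nx i j) := by
  unfold Xpix; measurability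

theorem measurableSet_PhiSet {Nφ : ℕ} (ang : Fin Nφ → ℝ) (q : Fin Nφ) :
    MeasurableSet (PhiSet ang q) := by
  unfold PhiSet; measurability

theorem isBounded_Omg : Bornology.IsBounded Omg := by
  refine (Metric.isBounded_Icc (-1 : ℝ) 1).prod (Metric.isBounded_Icc (-1 : ℝ) 1) |>.subset ?_
  rintro ⟨x₁, x₂⟩ hx
  have : x₁ ^ 2 + x₂ ^ 2 < 1 := hx
  refine ⟨abs_le.1 ?_, abs_le.1 ?_⟩ <;>
    nlinarith [sq_abs x₁, sq_abs x₂, abs_nonneg x₁, abs_nonneg x₂]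

theorem isBounded_Sdom : Bornology.IsBounded Sdom :=
  (Metric.isBounded_Ico _ _).prod (Metric.isBounded_Ioo _ _)

theorem stmt7_general (Nx Nφ Ns : ℕ)
    (ang : Fin Nφ → ℝ)
    (ω : ℝ → ℝ → ℝ)
    (f : ℝ × ℝ → ℝ) (hf : MemLp f 2 volume) (hf0 : ∀ x ∉ Omg, f x = 0)
    (g : ℝ × ℝ → ℝ) (hg : MemLp g 2 volume) (hg0 : ∀ y ∉ Sdom, g y = 0) :
    ∫ y in Sdom, convRadon Nx Ns ang ω f y * g y
      = ∫ x in Omg, f x * convBack Nx Ns ang ω g x := by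
  have hf_int : Integrable f :=
    hf.integrable_of_forall_compl_eq_zero one_le_two isBounded_Omg.measure_lt_top hf0
  have hg_int : Integrable g :=
    hg.integrable_of_forall_compl_eq_zero one_le_two isBounded_Sdom.measure_lt_top hg0
  rw [setIntegral_eq_integral_of_forall_compl_eq_zero fun y hy => by rw [hg0 y hy, mul_zero],
    setIntegral_eq_integral_of_forall_compl_eq_zero fun x hx => by rw [hf0 x hx, zero_mul]]
  simp_rw [mul_comm (f _)]
  calc ∫ y, convRadon Nx Ns ang ω f y * g y
      = ∑ q, ∑ p : Fin Ns, (∑ i, ∑ j, ω (ang q) (proj (xc Nx i j) (ang q) - sc Ns p) *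
          ∫ x in Xpix Nx i j, f x) * ∫ z in PhiSet ang q ×ˢ Spix Ns p, g z :=
        integral_sum_sum_indicator_mul
          (fun q p => (measurableSet_PhiSet ang q).prod measurableSet_Ico) _ hg_int
    _ = ∑ i, ∑ j, (∑ q, ∑ p : Fin Ns, ω (ang q) (proj (xc Nx i j) (ang q) - sc Ns p) *
          ∫ z in PhiSet ang q ×ˢ Spix Ns p, g z) * ∫ x in Xpix Nx i j, f x :=
        sum_sum_mul_sum_sum_comm _ _ _
    _ = ∫ x, convBack Nx Ns ang ω g x * f x :=
        (integral_sum_sum_indicator_mul (measurableSet_Xpix Nx) _ hf_int).symm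

/-- For any discretization (spatial grid, strictly increasing angles in
`[0,π)` with their angular pixels, and detector pixels) and any weight function `ω`, the
convolutional Radon transform `R_ω` and convolutional backprojection `R_ω^*` satisfy, for
every `f ∈ L²(Ω)` and `g ∈ L²(S)` (thought of as extended by zero),
`∫_S (R_ω f) · g = ∫_Ω f · (R_ω^* g)`. -/
theorem stmt7 (Nx Nφ Ns : ℕ) (hNx : 0 < Nx) (hNφ : 0 < Nφ) (hNs : 0 < Ns)
    (ang : Fin Nφ → ℝ) (hmono : StrictMono ang) (hang : ∀ q, ang q ∈ Set.Ico 0 Real.pi)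
    (ω : ℝ → ℝ → ℝ)
    (f : ℝ × ℝ → ℝ) (hf : MemLp f 2 volume) (hf0 : ∀ x ∉ Omg, f x = 0)
    (g : ℝ × ℝ → ℝ) (hg : MemLp g 2 volume) (hg0 : ∀ y ∉ Sdom, g y = 0) :
    ∫ y in Sdom, convRadon Nx Ns ang ω f y * g y
      = ∫ x in Omg, f x * convBack Nx Ns ang ω g x :=
  stmt7_general Nx Nφ Ns ang ω f hf hf0 g hg hg0
end

section
/- Fix a discretization as in the context and let g ≡ 1 be the constant-one sinogram on S. Then for every i,j ∈ {0,…,N_x−1} with ‖x_ij‖ ≤ 1 − δ_s/2 and every x in the interior of X_ij, the pixel-driven backprojection is exact: (R^pd* g)(x) = π = (R* g)(x_ij). Equivalently, Σ_{q=0}^{N_φ−1} |Φ_q| · Σ_{p=0}^{N_s−1} δ_s · w^pd(x_ij·θ_{φ_q} − s_p) = π. -/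
open MeasureTheory Real Set Filter

/-!
On the interior of `X_ij` only the `(i, j)` term of `R^pd*` survives, and for `g ≡ 1` the integral
over `Φ_q × S_p` is `|Φ_q| δ_s`, so the backprojection is the discrete double sum. For each angle,
`|x_ij · θ_q| ≤ ‖x_ij‖ ≤ 1 - δ_s/2` keeps the detector position inside the range where the
rescaled hat functions `δ_s w^pd(· - s_p)` form a partition of unity, so the inner sum is `1`.
The half-sums defining `|Φ_q|` telescope around the periodically extended angle sequence to `π`.
That `|Φ_q|` is also the measure of the π-periodically folded pixel follows from the invariance of
Lebesgue measure under translations by `πℤ`.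
-/

theorem int_eq_zero_of_add_mul_mem_Ico {T lo φ : ℝ} (hT : 0 < T) {k : ℤ}
    (hφ : φ ∈ Ico lo (lo + T)) (hk : φ + k * T ∈ Ico lo (lo + T)) : k = 0 := by
  have hlt : (k : ℝ) * T < 1 * T := by linarith [hφ.1, hk.2]
  have hgt : (-1 : ℝ) * T < k * T := by linarith [hφ.2, hk.1]
  have h1 : (k : ℝ) < 1 := lt_of_mul_lt_mul_right hlt hT.le
  have h2 : (-1 : ℝ) < k := lt_of_mul_lt_mul_right hgt hT.le
  have h1' : k < 1 := by exact_mod_cast h1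
  have h2' : -1 < k := by exact_mod_cast h2
  omega

/-- The set is the image of `[lo, hi)` in `ℝ ⧸ Tℤ`, represented in `[0, T)`. Its measure is the
same in every fundamental domain, and in `[lo, lo + T)` it is `[lo, hi)` itself. -/
theorem volume_Ico_inter_periodization {T lo hi : ℝ} (hT : 0 < T) (hlen : hi - lo ≤ T) :
    volume {φ : ℝ | φ ∈ Ico 0 T ∧ ∃ k : ℤ, φ + k * T ∈ Ico lo hi}
      = ENNReal.ofReal (hi - lo) := by
  set A : Set ℝ := ⋃ k : ℤ, (fun φ => φ + k * T) ⁻¹' Ico lo hi with hA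
  have hA_meas : MeasurableSet A :=
    MeasurableSet.iUnion fun k => measurableSet_Ico.preimage (by fun_prop)
  have hA_inv : ∀ g : AddSubgroup.zmultiples T, (fun x => g +ᵥ x) ⁻¹' A = A := by
    rintro ⟨_, n, rfl⟩
    ext φ
    simp only [hA, mem_preimage, mem_iUnion, AddSubgroup.vadd_def, vadd_eq_add, zsmul_eq_mul]
    constructor
    · rintro ⟨k, hk⟩
      exact ⟨n + k, by convert hk using 1; push_cast; ring⟩
    · rintro ⟨k, hk⟩
      exact ⟨k - n, by convert hk using 1; push_cast; ring⟩
  have hA_Ico : A ∩ Ico lo (lo + T) = Ico lo hi := by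
    ext φ
    simp only [hA, mem_inter_iff, mem_iUnion, mem_preimage]
    constructor
    · rintro ⟨⟨k, hk⟩, hφ⟩
      obtain rfl := int_eq_zero_of_add_mul_mem_Ico hT hφ
        ⟨hk.1, hk.2.trans_le (by linarith)⟩
      simpa using hk
    · intro hφ
      exact ⟨⟨0, by simpa using hφ⟩, hφ.1, by linarith [hφ.2]⟩
  have hset : {φ : ℝ | φ ∈ Ico 0 T ∧ ∃ k : ℤ, φ + k * T ∈ Ico lo hi} = A ∩ Ico 0 (0 + T) := by
    ext φ
    simp only [hA, mem_ofPred_eq, mem_inter_iff, mem_iUnion, mem_preimage, zero_add]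
    tauto
  calc volume {φ : ℝ | φ ∈ Ico 0 T ∧ ∃ k : ℤ, φ + k * T ∈ Ico lo hi}
      = volume (A ∩ Ioc 0 (0 + T)) := by
        rw [hset]; exact measure_congr ((ae_eq_refl A).inter Ico_ae_eq_Ioc)
    _ = volume (A ∩ Ioc lo (lo + T)) :=
        (isAddFundamentalDomain_Ioc hT 0).measure_set_eq (isAddFundamentalDomain_Ioc hT lo)
          hA_meas hA_inv
    _ = volume (Ico lo hi) := by
        rw [← hA_Ico]; exact measure_congr ((ae_eq_refl A).inter Ico_ae_eq_Ioc.symm)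
    _ = ENNReal.ofReal (hi - lo) := Real.volume_Ico

theorem sum_angNext {n : ℕ} (ang : Fin (n + 1) → ℝ) :
    ∑ q, angNext ang q = ∑ q, ang q + π := by
  have hlast : angNext ang (Fin.last n) = ang 0 + π := by simp [angNext]
  have hcast (q : Fin n) : angNext ang q.castSucc = ang q.succ := by
    simp [angNext]
    rfl
  rw [Fin.sum_univ_castSucc, Fin.sum_univ_succ (f := ang)]
  simp only [hcast, hlast]
  ring

theorem sum_angPrev {n : ℕ} (ang : Fin (n + 1) → ℝ) :
    ∑ q, angPrev ang q = ∑ q, ang q - π := by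
  have hzero : angPrev ang 0 = ang (Fin.last n) - π := by
    simp [angPrev]
    rfl
  have hsucc (q : Fin n) : angPrev ang q.succ = ang q.castSucc := by
    simp [angPrev]
    rfl
  rw [Fin.sum_univ_succ, Fin.sum_univ_castSucc (f := ang)]
  simp only [hsucc, hzero]
  ring

theorem sum_phiLen {n : ℕ} (ang : Fin (n + 1) → ℝ) : ∑ q, phiLen ang q = π := by
  have h (q : Fin (n + 1)) : phiLen ang q = angNext ang q / 2 - angPrev ang q / 2 := by
    unfold phiLen phiHi phiLo; ring
  simp only [h, Finset.sum_sub_distrib, ← Finset.sum_div, sum_angNext, sum_angPrev]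
  ring

section AngularPixels

variable {Nφ : ℕ} {ang : Fin Nφ → ℝ}

theorem angPrev_lt (hmono : StrictMono ang) (hang : ∀ q, ang q ∈ Ico 0 π) (q : Fin Nφ) :
    angPrev ang q < ang q := by
  unfold angPrev
  split_ifs with hq
  · linarith [(hang ⟨Nφ - 1, Nat.sub_lt q.pos Nat.one_pos⟩).2, (hang q).1]
  · exact hmono (Fin.lt_def.2 (by simp only; omega))

theorem lt_angNext (hmono : StrictMono ang) (hang : ∀ q, ang q ∈ Ico 0 π) (q : Fin Nφ) :
    ang q < angNext ang q := by
  unfold angNext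
  split_ifs with hq
  · exact hmono (Fin.lt_def.2 (by simp only; omega))
  · linarith [(hang q).2, (hang ⟨0, q.pos⟩).1]

theorem phiLen_nonneg (hmono : StrictMono ang) (hang : ∀ q, ang q ∈ Ico 0 π) (q : Fin Nφ) :
    0 ≤ phiLen ang q := by
  have := angPrev_lt hmono hang q
  have := lt_angNext hmono hang q
  unfold phiLen phiHi phiLo
  linarith

theorem volume_PhiSet (hmono : StrictMono ang) (hang : ∀ q, ang q ∈ Ico 0 π) (q : Fin Nφ) :
    volume (PhiSet ang q) = ENNReal.ofReal (phiLen ang q) := by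
  obtain ⟨n, rfl⟩ : ∃ n, Nφ = n + 1 := ⟨Nφ - 1, by have := q.pos; omega⟩
  have hle : phiLen ang q ≤ π := by
    rw [← sum_phiLen ang]
    exact Finset.single_le_sum (fun q _ => phiLen_nonneg hmono hang q) (Finset.mem_univ q)
  exact volume_Ico_inter_periodization pi_pos hle

theorem integral_one_PhiSet_prod_Spix {Ns : ℕ} (hmono : StrictMono ang)
    (hang : ∀ q, ang q ∈ Ico 0 π) (q : Fin Nφ) (p : Fin Ns) :
    ∫ _ in PhiSet ang q ×ˢ Spix Ns p, (1 : ℝ) = phiLen ang q * (2 / (Ns : ℝ)) := by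
  have hSpix : sc Ns p + 2 / (Ns : ℝ) / 2 - (sc Ns p - 2 / (Ns : ℝ) / 2) = 2 / Ns := by ring
  rw [setIntegral_const, smul_eq_mul, mul_one, measureReal_def, Measure.volume_eq_prod,
    Measure.prod_prod, volume_PhiSet hmono hang, Spix, Real.volume_Ico, hSpix,
    ENNReal.toReal_mul, ENNReal.toReal_ofReal (phiLen_nonneg hmono hang q),
    ENNReal.toReal_ofReal (by positivity)]

end AngularPixels

theorem sum_range_hat_eq_one {N : ℕ} {u : ℝ} (hu0 : 0 ≤ u) (huN : u ≤ N - 1) :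
    ∑ p ∈ Finset.range N, max (1 - |u - p|) 0 = 1 := by
  set f : ℕ → ℝ := fun p => max (1 - |u - p|) 0
  set m := ⌊u⌋₊
  have hmu : (m : ℝ) ≤ u := Nat.floor_le hu0
  have hum : u < m + 1 := Nat.lt_floor_add_one u
  have hmN : m < N := by exact_mod_cast (show (m : ℝ) < N by linarith)
  have hfm : f m = 1 - (u - m) := by
    simp only [f, abs_of_nonneg (sub_nonneg.2 hmu), max_eq_left (by linarith : 0 ≤ 1 - (u - m))]
  have hfm1 : f (m + 1) = u - m := by
    simp only [f, Nat.cast_succ, abs_of_neg (sub_neg.2 hum)]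
    rw [max_eq_left (by linarith)]; ring
  have hfar (p : ℕ) (hp : p ≠ m) (hp1 : p ≠ m + 1) : f p = 0 := by
    have : 1 ≤ |u - p| := by
      rcases Nat.lt_or_gt_of_ne hp with h | h
      · have : (p : ℝ) + 1 ≤ m := by exact_mod_cast h
        rw [abs_of_nonneg (by linarith)]; linarith
      · have : (m : ℝ) + 2 ≤ p := by exact_mod_cast (by omega : m + 2 ≤ p)
        rw [abs_of_nonpos (by linarith)]; linarith
    exact max_eq_right (by linarith)
  rcases Nat.lt_or_ge (m + 1) N with hm1 | hm1
  · rw [← Finset.sum_subset (s₁ := {m, m + 1}) (by simp [Finset.insert_subset_iff, hmN, hm1])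
      (fun p _ hp => hfar p (by simp_all) (by simp_all)), Finset.sum_pair (by omega), hfm, hfm1]
    ring
  · -- `u = N - 1`: the hat at the missing node `N` would vanish there anyway.
    have hu : u = m := by
      have : (N : ℝ) ≤ m + 1 := by exact_mod_cast hm1
      linarith
    rw [Finset.sum_eq_single_of_mem m (Finset.mem_range.2 hmN)
      (fun p _ hp => hfar p hp (by simp at *; omega)), hfm, hu]
    ring

theorem sum_pixelWeight_eq_one {Ns : ℕ} (hNs : 0 < Ns) {t : ℝ}
    (ht : |t| ≤ 1 - (2 / (Ns : ℝ)) / 2) :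
    ∑ p : Fin Ns, (2 / (Ns : ℝ)) * pixelWeight (2 / (Ns : ℝ)) (t - sc Ns p) = 1 := by
  set δ := 2 / (Ns : ℝ) with hδ_def
  have hδ : 0 < δ := by positivity
  set u := (t + 1) / δ - 1 / 2
  have hsub (p : ℕ) : t - sc Ns p = δ * (u - p) := by
    simp only [u, sc, ← hδ_def]; field_simp; ring
  have hterm (p : ℕ) : δ * pixelWeight δ (t - sc Ns p) = max (1 - |u - p|) 0 := by
    have hmax : max (δ * (1 - |u - p|)) 0 = δ * max (1 - |u - p|) 0 := by
      rw [mul_max_of_nonneg _ _ hδ.le, mul_zero]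
    rw [pixelWeight, hsub, abs_mul, abs_of_pos hδ, ← mul_one_sub, hmax]
    field_simp
  have hNs' : (Ns : ℝ) = 2 / δ := by simp only [hδ_def]; field_simp
  obtain ⟨ht1, ht2⟩ := abs_le.1 ht
  simp only [hterm]
  rw [Fin.sum_univ_eq_sum_range (fun p => max (1 - |u - p|) 0)]
  apply sum_range_hat_eq_one
  · simp only [u, sub_nonneg, le_div_iff₀ hδ]; linarith
  · rw [hNs', sub_le_iff_le_add, div_le_iff₀ hδ]
    have : (2 / δ - 1 + 1 / 2) * δ = 2 - δ / 2 := by field_simp; ring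
    rw [this]; linarith

theorem abs_proj_le (x : ℝ × ℝ) (φ : ℝ) : |proj x φ| ≤ √(x.1 ^ 2 + x.2 ^ 2) := by
  rw [← sqrt_sq_eq_abs]
  apply sqrt_le_sqrt
  rw [proj]
  nlinarith [sq_nonneg (x.1 * sin φ - x.2 * cos φ), sin_sq_add_cos_sq φ]

/-- In the product (sup) metric of `ℝ × ℝ` the square pixel is a closed ball. -/
theorem Xpix_eq_closedBall (Nx : ℕ) (i j : Fin Nx) :
    Xpix Nx i j = Metric.closedBall (xc Nx i j) ((2 / (Nx : ℝ)) / 2) := by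
  ext y
  simp only [Xpix, Metric.mem_closedBall, Prod.dist_eq, Real.dist_eq, max_le_iff, mem_ofPred_eq]

theorem eq_of_abs_sub_gridNode_lt {δ y : ℝ} {a b : ℕ}
    (ha : |y - ((a + 1 / 2) * δ - 1)| < δ / 2) (hb : |y - ((b + 1 / 2) * δ - 1)| ≤ δ / 2) :
    a = b := by
  have hδ : 0 < δ := by linarith [abs_nonneg (y - ((a + 1 / 2) * δ - 1))]
  have hdist : |((a : ℝ) - b) * δ| < 1 * δ := by
    calc |((a : ℝ) - b) * δ|
        = |(y - ((b + 1 / 2) * δ - 1)) - (y - ((a + 1 / 2) * δ - 1))| := by ring_nf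
      _ ≤ |y - ((b + 1 / 2) * δ - 1)| + |y - ((a + 1 / 2) * δ - 1)| := abs_sub _ _
      _ < 1 * δ := by linarith
  rw [abs_mul, abs_of_pos hδ] at hdist
  have h := abs_sub_lt_iff.1 (lt_of_mul_lt_mul_right hdist hδ.le)
  have h1 : (a : ℤ) - b < 1 := by exact_mod_cast h.1
  have h2 : (b : ℤ) - a < 1 := by exact_mod_cast h.2
  omega

theorem mem_Xpix_iff_of_mem_interior {Nx : ℕ} {i j i' j' : Fin Nx} {x : ℝ × ℝ}
    (hx : x ∈ interior (Xpix Nx i j)) : x ∈ Xpix Nx i' j' ↔ i' = i ∧ j' = j := by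
  constructor
  · rintro ⟨h1, h2⟩
    rw [Xpix_eq_closedBall, interior_closedBall', Metric.mem_ball, Prod.dist_eq, max_lt_iff,
      Real.dist_eq, Real.dist_eq] at hx
    exact ⟨Fin.ext (eq_of_abs_sub_gridNode_lt hx.1 h1).symm,
      Fin.ext (eq_of_abs_sub_gridNode_lt hx.2 h2).symm⟩
  · rintro ⟨rfl, rfl⟩
    exact interior_subset hx

theorem convBack_of_mem_interior {Nx Ns Nφ : ℕ} (ang : Fin Nφ → ℝ) (ω : ℝ → ℝ → ℝ)
    (g : ℝ × ℝ → ℝ) {i j : Fin Nx} {x : ℝ × ℝ} (hx : x ∈ interior (Xpix Nx i j)) :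
    convBack Nx Ns ang ω g x = ∑ q : Fin Nφ, ∑ p : Fin Ns,
      ω (ang q) (proj (xc Nx i j) (ang q) - sc Ns p) * ∫ z in PhiSet ang q ×ˢ Spix Ns p, g z := by
  simp only [convBack, indicator, mem_Xpix_iff_of_mem_interior hx, ite_mul, one_mul, zero_mul]
  rw [Fintype.sum_eq_single i fun i' hi' => by simp [hi'],
    Fintype.sum_eq_single j fun j' hj' => by simp [hj']]
  simp

theorem stmt11_general (Nx Nφ Ns : ℕ) (hNφ : 0 < Nφ) (hNs : 0 < Ns)
    (ang : Fin Nφ → ℝ) (hmono : StrictMono ang) (hang : ∀ q, ang q ∈ Set.Ico 0 Real.pi)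
    (i j : Fin Nx)
    (hnorm : Real.sqrt ((xc Nx i j).1 ^ 2 + (xc Nx i j).2 ^ 2) ≤ 1 - (2 / (Ns : ℝ)) / 2)
    (x : ℝ × ℝ) (hx : x ∈ interior (Xpix Nx i j)) :
    convBack Nx Ns ang (fun _ t => pixelWeight (2 / (Ns : ℝ)) t) (fun _ => (1 : ℝ)) x
        = Real.pi
    ∧ radonAdj (fun _ => (1 : ℝ)) (xc Nx i j) = Real.pi
    ∧ ∑ q : Fin Nφ, phiLen ang q *
        ∑ p : Fin Ns, (2 / (Ns : ℝ)) *
          pixelWeight (2 / (Ns : ℝ)) (proj (xc Nx i j) (ang q) - sc Ns (p : ℕ))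
      = Real.pi := by
  obtain ⟨n, rfl⟩ : ∃ n, Nφ = n + 1 := ⟨Nφ - 1, by omega⟩
  have hdiscrete : ∑ q : Fin (n + 1), phiLen ang q *
      ∑ p : Fin Ns, (2 / (Ns : ℝ)) *
        pixelWeight (2 / (Ns : ℝ)) (proj (xc Nx i j) (ang q) - sc Ns (p : ℕ)) = π := by
    simp only [sum_pixelWeight_eq_one hNs ((abs_proj_le _ _).trans hnorm), mul_one]
    exact sum_phiLen ang
  refine ⟨?_, by simp [radonAdj], hdiscrete⟩
  rw [convBack_of_mem_interior ang _ _ hx, ← hdiscrete]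
  simp only [integral_one_PhiSet_prod_Spix hmono hang, Finset.mul_sum]
  exact Finset.sum_congr rfl fun q _ => Finset.sum_congr rfl fun p _ => by ring

/-- For a fixed discretization and the constant-one sinogram `g ≡ 1`:
for every `i, j` with `‖x_ij‖ ≤ 1 - δ_s/2` and every `x` in the interior of `X_ij`, the
pixel-driven backprojection is exact, `(R^pd* g)(x) = π = (R^* g)(x_ij)`; equivalently
`Σ_q |Φ_q| Σ_p δ_s · w^pd(x_ij · θ_q - s_p) = π`. -/
theorem stmt11 (Nx Nφ Ns : ℕ) (hNx : 0 < Nx) (hNφ : 0 < Nφ) (hNs : 0 < Ns)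
    (ang : Fin Nφ → ℝ) (hmono : StrictMono ang) (hang : ∀ q, ang q ∈ Set.Ico 0 Real.pi)
    (i j : Fin Nx)
    (hnorm : Real.sqrt ((xc Nx i j).1 ^ 2 + (xc Nx i j).2 ^ 2) ≤ 1 - (2 / (Ns : ℝ)) / 2)
    (x : ℝ × ℝ) (hx : x ∈ interior (Xpix Nx i j)) :
    convBack Nx Ns ang (fun _ t => pixelWeight (2 / (Ns : ℝ)) t) (fun _ => (1 : ℝ)) x
        = Real.pi
    ∧ radonAdj (fun _ => (1 : ℝ)) (xc Nx i j) = Real.pi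
    ∧ ∑ q : Fin Nφ, phiLen ang q *
        ∑ p : Fin Ns, (2 / (Ns : ℝ)) *
          pixelWeight (2 / (Ns : ℝ)) (proj (xc Nx i j) (ang q) - sc Ns (p : ℕ))
      = Real.pi :=
  stmt11_general Nx Nφ Ns hNφ hNs ang hmono hang i j hnorm x hx
end

section
/- Let δ_x > 0. For every φ ∈ [0,π), the ray-driven weight function has unit total mass: ∫_ℝ w^rd(φ,t) dt = 1. -/
/-!
Off the null set `|t| = s̄(φ)`, `w^rd(φ, ·)` is the even trapezoid of height
`H = 1 / (δ_x max(|cos φ|, |sin φ|))` on `|t| < s_(φ)`, decaying linearly to `0` on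
`s_(φ) ≤ |t| ≤ s̄(φ)`: the slope in the definition is `H / (s̄ - s_)` because
`s̄ - s_ = δ_x min(|cos φ|, |sin φ|)` and `max · min = |cos φ sin φ|`. Such a trapezoid has area
`(s_ + s̄) H`, and `s_ + s̄ = δ_x max(|cos φ|, |sin φ|)`.
-/

open MeasureTheory Real Set Filter

noncomputable def trapezoidProfile (a b H x : ℝ) : ℝ :=
  if x < a then H else if x < b then H * (b - x) / (b - a) else 0

lemma trapezoidProfile_eq_indicator_add_indicator (a b H : ℝ) :
    trapezoidProfile a b H =
      (Iio a).indicator (fun _ => H) + (Ico a b).indicator (fun x => H * (b - x) / (b - a)) := by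
  ext x
  by_cases hxa : x < a
  · simp [trapezoidProfile, hxa]
  · simp [trapezoidProfile, hxa, indicator, not_lt.1 hxa]

lemma integral_linear_descent {a b : ℝ} (hab : a ≤ b) (H : ℝ) :
    ∫ x in a..b, H * (b - x) / (b - a) = (b - a) / 2 * H := by
  rcases hab.eq_or_lt with rfl | hlt
  · simp
  rw [intervalIntegral.integral_div, intervalIntegral.integral_const_mul,
    intervalIntegral.integral_sub intervalIntegrable_const intervalIntegral.intervalIntegrable_id,
    intervalIntegral.integral_const, integral_id, smul_eq_mul]
  field_simp [(sub_pos.2 hlt).ne']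
  ring

lemma integral_Ioi_trapezoidProfile {a b : ℝ} (ha : 0 ≤ a) (hab : a ≤ b) (H : ℝ) :
    ∫ x in Ioi 0, trapezoidProfile a b H x = (a + b) / 2 * H := by
  have hplateau : IntegrableOn (fun _ => H) (Iio a) (volume.restrict (Ici 0)) := by
    rw [IntegrableOn, Measure.restrict_restrict measurableSet_Iio, Iio_inter_Ici]
    exact integrableOn_const measure_Ico_lt_top.ne
  have hslope : IntegrableOn (fun x => H * (b - x) / (b - a)) (Ico a b) (volume.restrict (Ici 0)) :=
    ((Continuous.integrableOn_Icc (by fun_prop)).mono_set Ico_subset_Icc_self).restrict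
  rw [← integral_Ici_eq_integral_Ioi, trapezoidProfile_eq_indicator_add_indicator, Pi.add_def,
    integral_add (hplateau.integrable_indicator measurableSet_Iio)
      (hslope.integrable_indicator measurableSet_Ico),
    setIntegral_indicator measurableSet_Iio, setIntegral_indicator measurableSet_Ico,
    Ici_inter_Iio, inter_eq_self_of_subset_right (Ico_subset_Ici_self.trans (Ici_subset_Ici.2 ha)),
    setIntegral_const, measureReal_def, Real.volume_Ico, ENNReal.toReal_ofReal (by linarith),
    smul_eq_mul, integral_Ico_eq_integral_Ioc, ← intervalIntegral.integral_of_le hab,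
    integral_linear_descent hab]
  ring

lemma integral_trapezoidProfile_abs {a b : ℝ} (ha : 0 ≤ a) (hab : a ≤ b) (H : ℝ) :
    ∫ t, trapezoidProfile a b H |t| = (a + b) * H := by
  rw [integral_comp_abs, integral_Ioi_trapezoidProfile ha hab]
  ring

lemma half_mul_abs_sub_add_half_mul_add (δ c s : ℝ) :
    δ / 2 * |c - s| + δ / 2 * (c + s) = δ * max c s := by
  rw [← max_add_min c s, abs_sub_comm, ← max_sub_min_eq_abs]
  ring

lemma half_mul_add_sub_half_mul_abs_sub (δ c s : ℝ) :
    δ / 2 * (c + s) - δ / 2 * |c - s| = δ * min c s := by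
  rw [← max_add_min c s, abs_sub_comm, ← max_sub_min_eq_abs]
  ring

lemma rayWeight_eq_trapezoidProfile_abs (δx φ t : ℝ)
    (ht : |t| ≠ δx / 2 * (|cos φ| + |sin φ|)) :
    rayWeight δx φ t =
      trapezoidProfile (δx / 2 * |(|cos φ| - |sin φ|)|) (δx / 2 * (|cos φ| + |sin φ|))
        (1 / (δx * max |cos φ| |sin φ|)) |t| := by
  have hwidth := half_mul_add_sub_half_mul_abs_sub δx |cos φ| |sin φ|
  rw [rayWeight, trapezoidProfile, abs_mul, ← max_mul_min |cos φ| |sin φ|]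
  generalize |t| = x at ht ⊢
  set a := δx / 2 * |(|cos φ| - |sin φ|)|
  set b := δx / 2 * (|cos φ| + |sin φ|)
  rcases lt_or_ge x a with hxa | hax
  · rw [if_neg (fun h => (h.1.trans_lt hxa).false), if_pos hxa, if_pos hxa, one_div_mul_one_div]
  rcases lt_or_gt_of_ne ht with hxb | hbx
  · rw [if_pos ⟨hax, hxb⟩, if_neg hax.not_gt, if_pos hxb, hwidth]
    ring
  · rw [if_neg (fun h => h.2.not_gt hbx), if_neg hax.not_gt, if_neg (fun h => ht h.2),
      if_neg hax.not_gt, if_neg hbx.not_gt, mul_zero]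

lemma rayWeight_ae_eq_trapezoidProfile_abs (δx φ : ℝ) :
    rayWeight δx φ =ᵐ[volume] fun t =>
      trapezoidProfile (δx / 2 * |(|cos φ| - |sin φ|)|) (δx / 2 * (|cos φ| + |sin φ|))
        (1 / (δx * max |cos φ| |sin φ|)) |t| := by
  set b := δx / 2 * (|cos φ| + |sin φ|)
  filter_upwards [((finite_singleton b).insert (-b)).countable.ae_notMem volume] with t ht
  refine rayWeight_eq_trapezoidProfile_abs δx φ t fun htb => ht ?_
  rcases abs_choice t with h | h <;> rw [h] at htb
  · exact .inr htb
  · exact .inl (neg_eq_iff_eq_neg.1 htb)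

lemma max_abs_cos_abs_sin_pos (φ : ℝ) : 0 < max |cos φ| |sin φ| := by
  have h := cos_sq_add_sin_sq φ
  rw [← sq_abs (cos φ), ← sq_abs (sin φ)] at h
  nlinarith [le_max_left |cos φ| |sin φ|, le_max_right |cos φ| |sin φ|,
    abs_nonneg (cos φ), abs_nonneg (sin φ)]

theorem stmt15_general (δx : ℝ) (hδx : 0 < δx) (φ : ℝ) :
    ∫ t : ℝ, rayWeight δx φ t = 1 := by
  have hs_nonneg : 0 ≤ δx / 2 * |(|cos φ| - |sin φ|)| := by positivity
  have hs_le : δx / 2 * |(|cos φ| - |sin φ|)| ≤ δx / 2 * (|cos φ| + |sin φ|) := by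
    gcongr
    simpa only [abs_abs] using abs_sub |cos φ| |sin φ|
  rw [integral_congr_ae (rayWeight_ae_eq_trapezoidProfile_abs δx φ),
    integral_trapezoidProfile_abs hs_nonneg hs_le, half_mul_abs_sub_add_half_mul_add]
  field_simp [(max_abs_cos_abs_sin_pos φ).ne']

/-- For `δ_x > 0` and every `φ ∈ [0, π)`, the ray-driven weight function
has unit total mass: `∫_ℝ w^rd(φ, t) dt = 1`. -/
theorem stmt15 (δx : ℝ) (hδx : 0 < δx) (φ : ℝ) (hφ : φ ∈ Set.Ico 0 Real.pi) :
    ∫ t : ℝ, rayWeight δx φ t = 1 :=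
  stmt15_general δx hδx φ
end
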